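/- (Monotonicity in subsidy.) For subsidies w ≤ w': (i) V_w(π, y) ≤ V_{w'}(π, y) for all π ∈ [0,1] and y ∈ {0,1}; (ii) the not-play action value is strictly increasing in the subsidy, with L0_{w'}V_{w'}(π,1) − L0_wV_w(π,1) ≥ w' − w for all π ∈ [0,1]; (iii) the play action value is nondecreasing: L1_wV_w(π,1) ≤ L1_{w'}V_{w'}(π,1) for all π ∈ [0,1]. -/

import Mathlib

/-! The difference `V_w - V_{w'}` of the two fixed points satisfies a contracting bound: if it is
at most `c` everywhere, then one application of the Bellman operators shows it is at most `β c`,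
because every action value averages the continuation values with total weight `β` and the
subsidy enters with a nonnegative sign. Applied to `c = sup (V_w - V_{w'})` this gives
`sup ≤ β sup`, so the supremum is nonpositive since `β < 1`. Parts (ii) and (iii) follow by
plugging `V_w ≤ V_{w'}` into the action values once more. -/

open Set

noncomputable section

/-- Expected immediate reward (success probability) at belief `π`. -/
def rhoB (ρ0 ρ1 π : ℝ) : ℝ := π * ρ0 + (1 - π) * ρ1

/-- Belief update after a play resulting in success. -/
def Gam1 (p00 p10 ρ0 ρ1 π : ℝ) : ℝ :=
  (π * ρ0 * p00 + (1 - π) * ρ1 * p10) / (π * ρ0 + (1 - π) * ρ1)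

/-- Belief update after a play resulting in failure. -/
def Gam0 (p00 p10 ρ0 ρ1 π : ℝ) : ℝ :=
  (π * (1 - ρ0) * p00 + (1 - π) * (1 - ρ1) * p10) /
    (π * (1 - ρ0) + (1 - π) * (1 - ρ1))

/-- Belief update without observation (natural Markov evolution). -/
def gam (p00 p10 π : ℝ) : ℝ := π * p00 + (1 - π) * p10

/-- Action value of playing an available arm. -/
def Lact1 (p00 p10 ρ0 ρ1 β θ11 : ℝ) (V : ℝ → Bool → ℝ) (π : ℝ) : ℝ :=
  rhoB ρ0 ρ1 π
    + β * rhoB ρ0 ρ1 π *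
        (θ11 * V (Gam1 p00 p10 ρ0 ρ1 π) true +
          (1 - θ11) * V (Gam1 p00 p10 ρ0 ρ1 π) false)
    + β * (1 - rhoB ρ0 ρ1 π) *
        (θ11 * V (Gam0 p00 p10 ρ0 ρ1 π) true +
          (1 - θ11) * V (Gam0 p00 p10 ρ0 ρ1 π) false)

/-- Action value of not playing an available arm (subsidy `w`). -/
def Lact0a (p00 p10 β w θ01 : ℝ) (V : ℝ → Bool → ℝ) (π : ℝ) : ℝ :=
  w + β * (θ01 * V (gam p00 p10 π) true + (1 - θ01) * V (gam p00 p10 π) false)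

/-- Action value for an unavailable arm (subsidy `w`). -/
def Lact0u (p00 p10 β w θ00 : ℝ) (V : ℝ → Bool → ℝ) (π : ℝ) : ℝ :=
  w + β * (θ00 * V (gam p00 p10 π) true + (1 - θ00) * V (gam p00 p10 π) false)

/-- Bellman operator of the constrained restless single-armed bandit with
stochastic availability; availability `y` is encoded by `Bool`. -/
def TwOp (p00 p10 ρ0 ρ1 β w θ11 θ01 θ00 : ℝ) (V : ℝ → Bool → ℝ) : ℝ → Bool → ℝ :=
  fun π y =>
    if y then max (Lact1 p00 p10 ρ0 ρ1 β θ11 V π) (Lact0a p00 p10 β w θ01 V π)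
    else Lact0u p00 p10 β w θ00 V π

/-- Bounded on the belief space `[0,1] × {0,1}`. -/
def BddOnIcc (V : ℝ → Bool → ℝ) : Prop :=
  ∃ C : ℝ, ∀ π ∈ Icc (0:ℝ) 1, ∀ y : Bool, |V π y| ≤ C

/-- Fixed point of an operator on the belief space `[0,1] × {0,1}`. -/
def FixedOnIcc (T : (ℝ → Bool → ℝ) → ℝ → Bool → ℝ) (V : ℝ → Bool → ℝ) : Prop :=
  ∀ π ∈ Icc (0:ℝ) 1, ∀ y : Bool, T V π y = V π y

lemma mul_add_one_sub_mul_mem_Icc {π a b : ℝ} (hπ : π ∈ Icc (0:ℝ) 1)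
    (ha : a ∈ Icc (0:ℝ) 1) (hb : b ∈ Icc (0:ℝ) 1) : π * a + (1 - π) * b ∈ Icc (0:ℝ) 1 := by
  obtain ⟨hπ0, hπ1⟩ := hπ
  constructor <;> nlinarith [ha.1, ha.2, hb.1, hb.2]

lemma mul_add_mul_div_add_mem_Icc {a b p q : ℝ} (ha : 0 ≤ a) (hb : 0 ≤ b)
    (hp : p ∈ Icc (0:ℝ) 1) (hq : q ∈ Icc (0:ℝ) 1) : (a * p + b * q) / (a + b) ∈ Icc (0:ℝ) 1 :=
  ⟨div_nonneg (by nlinarith [hp.1, hq.1]) (by linarith),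
    div_le_one_of_le₀ (by nlinarith [hp.2, hq.2]) (by linarith)⟩

lemma mul_add_one_sub_mul_le_add {θ x y x' y' c : ℝ} (hθ : θ ∈ Icc (0:ℝ) 1)
    (hx : x ≤ x' + c) (hy : y ≤ y' + c) :
    θ * x + (1 - θ) * y ≤ θ * x' + (1 - θ) * y' + c := by
  nlinarith [mul_le_mul_of_nonneg_left hx hθ.1,
    mul_le_mul_of_nonneg_left hy (sub_nonneg.mpr hθ.2)]

lemma nonpos_of_forall_le_imp_le_mul {α : Type*} {s : Set α} {f : α → ℝ} {β : ℝ} (hβ : β < 1)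
    (hf : BddAbove (f '' s)) (h : ∀ c, (∀ x ∈ s, f x ≤ c) → ∀ x ∈ s, f x ≤ β * c) :
    ∀ x ∈ s, f x ≤ 0 := by
  intro x hx
  have hle : ∀ z ∈ s, f z ≤ sSup (f '' s) := fun z hz => le_csSup hf (mem_image_of_mem f hz)
  have hsup : sSup (f '' s) ≤ β * sSup (f '' s) :=
    csSup_le (Nonempty.image f ⟨x, hx⟩) (forall_mem_image.mpr (h _ hle))
  nlinarith [hle x hx]

lemma BddOnIcc.bddAbove_image_sub {V U : ℝ → Bool → ℝ} (hV : BddOnIcc V) (hU : BddOnIcc U) :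
    BddAbove ((fun p : ℝ × Bool => V p.1 p.2 - U p.1 p.2) '' (Icc (0:ℝ) 1 ×ˢ univ)) := by
  obtain ⟨C, hC⟩ := hV
  obtain ⟨C', hC'⟩ := hU
  refine ⟨C + C', forall_mem_image.mpr fun p hp => ?_⟩
  linarith [(abs_le.mp (hC p.1 hp.1 p.2)).2, (abs_le.mp (hC' p.1 hp.1 p.2)).1]

section BeliefUpdates

variable {p00 p10 ρ0 ρ1 π : ℝ}

lemma gam_mem_Icc (hp00 : p00 ∈ Icc (0:ℝ) 1) (hp10 : p10 ∈ Icc (0:ℝ) 1)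
    (hπ : π ∈ Icc (0:ℝ) 1) : gam p00 p10 π ∈ Icc (0:ℝ) 1 :=
  mul_add_one_sub_mul_mem_Icc hπ hp00 hp10

lemma rhoB_mem_Icc (hρ0 : ρ0 ∈ Icc (0:ℝ) 1) (hρ1 : ρ1 ∈ Icc (0:ℝ) 1)
    (hπ : π ∈ Icc (0:ℝ) 1) : rhoB ρ0 ρ1 π ∈ Icc (0:ℝ) 1 :=
  mul_add_one_sub_mul_mem_Icc hπ hρ0 hρ1

lemma Gam1_mem_Icc (hp00 : p00 ∈ Icc (0:ℝ) 1) (hp10 : p10 ∈ Icc (0:ℝ) 1)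
    (hρ0 : 0 ≤ ρ0) (hρ1 : 0 ≤ ρ1) (hπ : π ∈ Icc (0:ℝ) 1) :
    Gam1 p00 p10 ρ0 ρ1 π ∈ Icc (0:ℝ) 1 :=
  mul_add_mul_div_add_mem_Icc (mul_nonneg hπ.1 hρ0) (mul_nonneg (sub_nonneg.mpr hπ.2) hρ1)
    hp00 hp10

lemma Gam0_mem_Icc (hp00 : p00 ∈ Icc (0:ℝ) 1) (hp10 : p10 ∈ Icc (0:ℝ) 1)
    (hρ0 : ρ0 ≤ 1) (hρ1 : ρ1 ≤ 1) (hπ : π ∈ Icc (0:ℝ) 1) :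
    Gam0 p00 p10 ρ0 ρ1 π ∈ Icc (0:ℝ) 1 :=
  mul_add_mul_div_add_mem_Icc (mul_nonneg hπ.1 (sub_nonneg.mpr hρ0))
    (mul_nonneg (sub_nonneg.mpr hπ.2) (sub_nonneg.mpr hρ1)) hp00 hp10

end BeliefUpdates

section ActionValues

variable {p00 p10 ρ0 ρ1 β θ : ℝ} {V U : ℝ → Bool → ℝ} {c π : ℝ}

lemma Lact1_le_add (hp00 : p00 ∈ Icc (0:ℝ) 1) (hp10 : p10 ∈ Icc (0:ℝ) 1)
    (hρ0 : ρ0 ∈ Icc (0:ℝ) 1) (hρ1 : ρ1 ∈ Icc (0:ℝ) 1) (hβ : 0 ≤ β) (hθ : θ ∈ Icc (0:ℝ) 1)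
    (hVU : ∀ q ∈ Icc (0:ℝ) 1, ∀ y, V q y ≤ U q y + c) (hπ : π ∈ Icc (0:ℝ) 1) :
    Lact1 p00 p10 ρ0 ρ1 β θ V π ≤ Lact1 p00 p10 ρ0 ρ1 β θ U π + β * c := by
  have mix_le : ∀ q ∈ Icc (0:ℝ) 1, θ * V q true + (1 - θ) * V q false
      ≤ θ * U q true + (1 - θ) * U q false + c :=
    fun q hq => mul_add_one_sub_mul_le_add hθ (hVU q hq true) (hVU q hq false)
  have h1 := mix_le _ (Gam1_mem_Icc hp00 hp10 hρ0.1 hρ1.1 hπ)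
  have h0 := mix_le _ (Gam0_mem_Icc hp00 hp10 hρ0.2 hρ1.2 hπ)
  have hcomb := mul_le_mul_of_nonneg_left
    (mul_add_one_sub_mul_le_add (rhoB_mem_Icc hρ0 hρ1 hπ) h1 h0) hβ
  unfold Lact1
  linarith

lemma Lact0a_add_sub_le_add {w w' : ℝ} (hp00 : p00 ∈ Icc (0:ℝ) 1) (hp10 : p10 ∈ Icc (0:ℝ) 1)
    (hβ : 0 ≤ β) (hθ : θ ∈ Icc (0:ℝ) 1)
    (hVU : ∀ q ∈ Icc (0:ℝ) 1, ∀ y, V q y ≤ U q y + c) (hπ : π ∈ Icc (0:ℝ) 1) :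
    Lact0a p00 p10 β w θ V π + (w' - w) ≤ Lact0a p00 p10 β w' θ U π + β * c := by
  have hq := gam_mem_Icc hp00 hp10 hπ
  have hcomb := mul_le_mul_of_nonneg_left
    (mul_add_one_sub_mul_le_add hθ (hVU _ hq true) (hVU _ hq false)) hβ
  unfold Lact0a
  linarith

lemma TwOp_le_add {w w' θ11 θ01 θ00 : ℝ} (hp00 : p00 ∈ Icc (0:ℝ) 1)
    (hp10 : p10 ∈ Icc (0:ℝ) 1) (hρ0 : ρ0 ∈ Icc (0:ℝ) 1) (hρ1 : ρ1 ∈ Icc (0:ℝ) 1)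
    (hβ : 0 ≤ β) (hθ11 : θ11 ∈ Icc (0:ℝ) 1) (hθ01 : θ01 ∈ Icc (0:ℝ) 1)
    (hθ00 : θ00 ∈ Icc (0:ℝ) 1) (hw : w ≤ w')
    (hVU : ∀ q ∈ Icc (0:ℝ) 1, ∀ y, V q y ≤ U q y + c) (hπ : π ∈ Icc (0:ℝ) 1) (y : Bool) :
    TwOp p00 p10 ρ0 ρ1 β w θ11 θ01 θ00 V π y
      ≤ TwOp p00 p10 ρ0 ρ1 β w' θ11 θ01 θ00 U π y + β * c := by
  have h0a (θ : ℝ) (hθ : θ ∈ Icc (0:ℝ) 1) :=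
    Lact0a_add_sub_le_add (w := w) (w' := w') hp00 hp10 hβ hθ hVU hπ
  cases y with
  | false =>
    -- `Lact0u` is `Lact0a` with `θ00` in place of `θ01`
    show Lact0a p00 p10 β w θ00 V π ≤ Lact0a p00 p10 β w' θ00 U π + β * c
    linarith [h0a θ00 hθ00]
  | true =>
    rw [TwOp, TwOp, if_pos rfl, if_pos rfl, ← max_add_add_right]
    exact max_le_max (Lact1_le_add hp00 hp10 hρ0 hρ1 hβ hθ11 hVU hπ)
      (by linarith [h0a θ01 hθ01])

end ActionValues

/-- **Monotonicity in subsidy.** For subsidies `w ≤ w'`: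
(i) `V_w(π,y) ≤ V_{w'}(π,y)`; (ii) the not-play action value grows at least
linearly, `L0_{w'}V_{w'}(π,1) − L0_w V_w(π,1) ≥ w' − w`; (iii) the play
action value is nondecreasing in the subsidy. -/
theorem stmt12 (p00 p10 ρ0 ρ1 β θ11 θ01 θ00 : ℝ)
    (hp00 : p00 ∈ Icc (0:ℝ) 1) (hp10 : p10 ∈ Icc (0:ℝ) 1)
    (hρ0 : 0 < ρ0) (hρ01 : ρ0 < ρ1) (hρ1 : ρ1 < 1)
    (hβ : β ∈ Ioo (0:ℝ) 1)
    (hθ11 : θ11 ∈ Icc (0:ℝ) 1) (hθ01 : θ01 ∈ Icc (0:ℝ) 1) (hθ00 : θ00 ∈ Icc (0:ℝ) 1)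
    (V : ℝ → ℝ → Bool → ℝ)
    (hVb : ∀ w : ℝ, BddOnIcc (V w))
    (hVfix : ∀ w : ℝ, FixedOnIcc (TwOp p00 p10 ρ0 ρ1 β w θ11 θ01 θ00) (V w)) :
    ∀ w w' : ℝ, w ≤ w' →
      (∀ π ∈ Icc (0:ℝ) 1, ∀ y : Bool, V w π y ≤ V w' π y)
      ∧ (∀ π ∈ Icc (0:ℝ) 1,
          w' - w ≤ Lact0a p00 p10 β w' θ01 (V w') π - Lact0a p00 p10 β w θ01 (V w) π)
      ∧ (∀ π ∈ Icc (0:ℝ) 1,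
          Lact1 p00 p10 ρ0 ρ1 β θ11 (V w) π ≤ Lact1 p00 p10 ρ0 ρ1 β θ11 (V w') π) := by
  intro w w' hw
  have hρ0' : ρ0 ∈ Icc (0:ℝ) 1 := ⟨hρ0.le, by linarith⟩
  have hρ1' : ρ1 ∈ Icc (0:ℝ) 1 := ⟨by linarith, hρ1.le⟩
  have hdiff_nonpos := nonpos_of_forall_le_imp_le_mul hβ.2
      ((hVb w).bddAbove_image_sub (hVb w')) fun c hc q hq => by
    rw [← hVfix w q.1 hq.1 q.2, ← hVfix w' q.1 hq.1 q.2, sub_le_iff_le_add']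
    exact TwOp_le_add hp00 hp10 hρ0' hρ1' hβ.1.le hθ11 hθ01 hθ00 hw
      (fun q' hq' y' => by linarith [hc (q', y') ⟨hq', mem_univ y'⟩]) hq.1 q.2
  have hle : ∀ π ∈ Icc (0:ℝ) 1, ∀ y, V w π y ≤ V w' π y + 0 := fun π hπ y => by
    linarith [hdiff_nonpos (π, y) ⟨hπ, mem_univ y⟩]
  refine ⟨fun π hπ y => by linarith [hle π hπ y], fun π hπ => ?_, fun π hπ => ?_⟩
  · linarith [Lact0a_add_sub_le_add (w := w) (w' := w') hp00 hp10 hβ.1.le hθ01 hle hπ]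
  · linarith [Lact1_le_add hp00 hp10 hρ0' hρ1' hβ.1.le hθ11 hle hπ]
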